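/- Under the hypotheses of the previous statement (purified oracle U_p for a probability distribution p on [n], copy unitary U_copy, Ũ_p := (U_p† ⊗ I)(I ⊗ U_copy)(U_p ⊗ I), and Π the orthogonal projection onto (ℂ·a₀) ⊗ (ℂ·e₁) ⊗ ℂⁿ), the squared norm of the projected state satisfies ‖Π(Ũ_p(a₀ ⊗ e₁ ⊗ e₁))‖² = Σ_{i∈[n]} p_i². -/

import Mathlib

open scoped ComplexInnerProductSpace

/-- The tensor product of two vectors of Euclidean spaces, realized concretely:
`(tp f g) (a, b) = f a * g b`.  This realizes `EuclideanSpace ℂ (α × β)` as the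
tensor product `EuclideanSpace ℂ α ⊗ EuclideanSpace ℂ β` with the induced inner
product `⟪u₁ ⊗ v₁, u₂ ⊗ v₂⟫ = ⟪u₁, u₂⟫ ⟪v₁, v₂⟫`. -/
noncomputable def tp {α β : Type*} (f : EuclideanSpace ℂ α) (g : EuclideanSpace ℂ β) :
    EuclideanSpace ℂ (α × β) := WithLp.toLp 2 (fun x => f x.1 * g x.2)

/-- Tensor of a vector of `EuclideanSpace ℂ α` with a vector of
`EuclideanSpace ℂ (β × γ)`, placed in `EuclideanSpace ℂ ((α × β) × γ)`. -/
noncomputable def tpL {α β γ : Type*} (a : EuclideanSpace ℂ α) (z : EuclideanSpace ℂ (β × γ)) :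
    EuclideanSpace ℂ ((α × β) × γ) := WithLp.toLp 2 (fun x => a x.1.1 * z (x.1.2, x.2))

/-- The standard orthonormal basis vector `e_i` of `ℂⁿ`. -/
noncomputable def eb {n : ℕ} (i : Fin n) : EuclideanSpace ℂ (Fin n) :=
  EuclideanSpace.single i 1

/-!
The operators `U_p ⊗ I`, `I ⊗ U_copy` and `U_p† ⊗ I` carry `a₀ ⊗ e₁ ⊗ e₁` successively to
`Σ √pᵢ φᵢ ⊗ eᵢ ⊗ e₁`, `Σ √pᵢ φᵢ ⊗ eᵢ ⊗ eᵢ` and `Σ √pᵢ U_p†(φᵢ ⊗ eᵢ) ⊗ eᵢ`.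
Since `U_p` is unitary, `⟪a₀ ⊗ e₁, U_p†(φᵢ ⊗ eᵢ)⟫ = ⟪U_p(a₀ ⊗ e₁), φᵢ ⊗ eᵢ⟫ = √pᵢ`, so the
component of the final state along the orthonormal vector `a₀ ⊗ e₁ ⊗ e_k` is `p_k`, and its
projection onto the span of these vectors has squared norm `Σ p_k²`.
-/

theorem Orthonormal.norm_orthogonalProjectionOnto_span_sq {𝕜 E ι : Type*} [RCLike 𝕜]
    [NormedAddCommGroup E] [InnerProductSpace 𝕜 E] [Fintype ι] {v : ι → E}
    (hv : Orthonormal 𝕜 v) [(Submodule.span 𝕜 (Set.range v)).HasOrthogonalProjection] (x : E) :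
    ‖((Submodule.span 𝕜 (Set.range v)).orthogonalProjectionOnto x : E)‖ ^ 2 =
      ∑ i, ‖inner 𝕜 (v i) x‖ ^ 2 := by
  have hb : Orthonormal 𝕜 (Module.Basis.span hv.linearIndependent) := by
    convert orthonormal_span hv
    rw [Module.Basis.span_apply]
  rw [Submodule.norm_coe,
    ← ((Module.Basis.span hv.linearIndependent).toOrthonormalBasis hb).sum_sq_norm_inner_right]
  congr! 2 with i
  simp [Module.Basis.span_apply]

section TensorProduct

variable {α β γ κ : Type*}

theorem tp_sum_left (s : Finset κ) (f : κ → EuclideanSpace ℂ α)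
    (g : EuclideanSpace ℂ β) : tp (∑ i ∈ s, f i) g = ∑ i ∈ s, tp (f i) g := by
  ext x
  simp [tp, WithLp.ofLp_sum, Finset.sum_apply, Finset.sum_mul]

theorem tp_smul_left (c : ℂ) (f : EuclideanSpace ℂ α) (g : EuclideanSpace ℂ β) :
    tp (c • f) g = c • tp f g := by
  ext x; simp [tp, mul_assoc]

theorem tp_tp_eq_tpL (a : EuclideanSpace ℂ α) (b : EuclideanSpace ℂ β) (c : EuclideanSpace ℂ γ) :
    tp (tp a b) c = tpL a (tp b c) := by
  ext x; simp [tp, tpL, mul_assoc]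

variable [Fintype α] [Fintype β]

theorem inner_tp (f f' : EuclideanSpace ℂ α) (g g' : EuclideanSpace ℂ β) :
    ⟪tp f g, tp f' g'⟫ = ⟪f, f'⟫ * ⟪g, g'⟫ := by
  simp only [tp, PiLp.inner_apply, RCLike.inner_apply, Fintype.sum_prod_type,
    Finset.sum_mul_sum, map_mul]
  exact Finset.sum_congr rfl fun _ _ => Finset.sum_congr rfl fun _ _ => mul_mul_mul_comm _ _ _ _

theorem norm_tp (f : EuclideanSpace ℂ α) (g : EuclideanSpace ℂ β) :
    ‖tp f g‖ = ‖f‖ * ‖g‖ := by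
  have h : ‖tp f g‖ ^ 2 = (‖f‖ * ‖g‖) ^ 2 := by
    rw [← inner_self_eq_norm_sq (𝕜 := ℂ), inner_tp, inner_self_eq_norm_sq_to_K,
      inner_self_eq_norm_sq_to_K, mul_pow]
    norm_cast
  exact (sq_eq_sq₀ (norm_nonneg _) (by positivity)).mp h

theorem Orthonormal.const_tp {x : EuclideanSpace ℂ α} (hx : ‖x‖ = 1)
    {w : κ → EuclideanSpace ℂ β} (hw : Orthonormal ℂ w) :
    Orthonormal ℂ fun k => tp x (w k) := by
  classical
  rw [orthonormal_iff_ite] at hw ⊢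
  intro j k
  rw [inner_tp, hw, inner_self_eq_norm_sq_to_K, hx]
  simp

theorem Orthonormal.tp_pointwise {f : κ → EuclideanSpace ℂ α} (hf : Orthonormal ℂ f)
    {g : κ → EuclideanSpace ℂ β} (hg : Orthonormal ℂ g) :
    Orthonormal ℂ fun k => tp (f k) (g k) := by
  classical
  rw [orthonormal_iff_ite] at hf hg ⊢
  intro j k
  rw [inner_tp, hf, hg]
  split_ifs <;> simp

end TensorProduct

theorem orthonormal_eb (n : ℕ) : Orthonormal ℂ (eb : Fin n → EuclideanSpace ℂ (Fin n)) :=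
  EuclideanSpace.orthonormal_single

theorem stmt2_general {n : ℕ} (hn : 1 ≤ n) {ι : Type*} [Fintype ι]
    (a₀ : EuclideanSpace ℂ ι) (ha₀ : ‖a₀‖ = 1)
    (φ : Fin n → EuclideanSpace ℂ ι) (hφ : Orthonormal ℂ φ)
    (p : Fin n → ℝ) (hp0 : ∀ i, 0 ≤ p i)
    (e₁ : EuclideanSpace ℂ (Fin n)) (he₁ : e₁ = eb ⟨0, hn⟩)
    (Up : EuclideanSpace ℂ (ι × Fin n) ≃ₗᵢ[ℂ] EuclideanSpace ℂ (ι × Fin n))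
    (hUp : Up (tp a₀ e₁) = ∑ i, (Real.sqrt (p i) : ℂ) • tp (φ i) (eb i))
    (Ucopy : EuclideanSpace ℂ (Fin n × Fin n) ≃ₗᵢ[ℂ] EuclideanSpace ℂ (Fin n × Fin n))
    (hUcopy : ∀ i : Fin n, Ucopy (tp (eb i) e₁) = tp (eb i) (eb i))
    -- `UpI = U_p ⊗ I` on `A ⊗ ℂⁿ ⊗ ℂⁿ`:
    (UpI : EuclideanSpace ℂ ((ι × Fin n) × Fin n) ≃ₗᵢ[ℂ] EuclideanSpace ℂ ((ι × Fin n) × Fin n))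
    (hUpI : ∀ (z : EuclideanSpace ℂ (ι × Fin n)) (c : EuclideanSpace ℂ (Fin n)),
      UpI (tp z c) = tp (Up z) c)
    -- `IUcopy = I ⊗ U_copy` on `A ⊗ ℂⁿ ⊗ ℂⁿ`:
    (IUcopy : EuclideanSpace ℂ ((ι × Fin n) × Fin n) ≃ₗᵢ[ℂ] EuclideanSpace ℂ ((ι × Fin n) × Fin n))
    (hIUcopy : ∀ (a : EuclideanSpace ℂ ι) (z : EuclideanSpace ℂ (Fin n × Fin n)),
      IUcopy (tpL a z) = tpL a (Ucopy z))
    -- `UpdI = U_p† ⊗ I` on `A ⊗ ℂⁿ ⊗ ℂⁿ`: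
    (UpdI : EuclideanSpace ℂ ((ι × Fin n) × Fin n) ≃ₗᵢ[ℂ] EuclideanSpace ℂ ((ι × Fin n) × Fin n))
    (hUpdI : ∀ (z : EuclideanSpace ℂ (ι × Fin n)) (c : EuclideanSpace ℂ (Fin n)),
      UpdI (tp z c) = tp (Up.symm z) c) :
    -- `Π` is the orthogonal projection onto `(ℂ·a₀) ⊗ (ℂ·e₁) ⊗ ℂⁿ`, i.e. onto the span of
    -- the orthonormal family `(a₀ ⊗ e₁ ⊗ e_k)_{k ∈ [n]}`:
    ‖(Submodule.orthogonalProjectionOnto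
        (Submodule.span ℂ (Set.range fun k : Fin n => tp (tp a₀ e₁) (eb k)))
        (UpdI (IUcopy (UpI (tp (tp a₀ e₁) e₁)))) :
      EuclideanSpace ℂ ((ι × Fin n) × Fin n))‖ ^ 2
      = ∑ i, (p i) ^ 2 := by
  have he₁_norm : ‖e₁‖ = 1 := by simp [he₁, eb]
  have hstate : UpdI (IUcopy (UpI (tp (tp a₀ e₁) e₁))) =
      ∑ i, (Real.sqrt (p i) : ℂ) • tp (Up.symm (tp (φ i) (eb i))) (eb i) := by
    rw [hUpI, hUp, tp_sum_left, map_sum, map_sum]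
    refine Finset.sum_congr rfl fun i _ => ?_
    rw [tp_smul_left, map_smul, map_smul, tp_tp_eq_tpL, hIUcopy, hUcopy, ← tp_tp_eq_tpL,
      hUpdI]
  have hamp : ∀ i, ⟪tp a₀ e₁, Up.symm (tp (φ i) (eb i))⟫ = Real.sqrt (p i) := fun i => by
    rw [← LinearIsometryEquiv.inner_map_eq_flip, hUp,
      (hφ.tp_pointwise (orthonormal_eb n)).inner_left_fintype, Complex.conj_ofReal]
  have hcoeff : ∀ k, ⟪tp (tp a₀ e₁) (eb k), UpdI (IUcopy (UpI (tp (tp a₀ e₁) e₁)))⟫ = p k := by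
    intro k
    simp only [hstate, inner_sum, inner_smul_right, inner_tp, hamp,
      orthonormal_iff_ite.mp (orthonormal_eb n), mul_ite, mul_one, mul_zero, Finset.sum_ite_eq,
      Finset.mem_univ, if_true]
    rw [← Complex.ofReal_mul, Real.mul_self_sqrt (hp0 k)]
  have hbasis : Orthonormal ℂ fun k => tp (tp a₀ e₁) (eb k) :=
    (orthonormal_eb n).const_tp (by rw [norm_tp, ha₀, he₁_norm, one_mul])
  rw [hbasis.norm_orthogonalProjectionOnto_span_sq]
  simp only [hcoeff, Complex.norm_real, Real.norm_eq_abs, sq_abs]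

/-- Let `n ≥ 1`, let `A` be a finite-dimensional complex inner product
space (realized as `EuclideanSpace ℂ ι`), `a₀ ∈ A` a unit vector, `(φ i)` an orthonormal
family in `A`, and `p` a probability distribution on `[n]`.  Let `U_p` be a unitary on
`A ⊗ ℂⁿ` with `U_p (a₀ ⊗ e₁) = ∑ i, √(p i) • (φ i ⊗ e i)`, and `U_copy` a unitary on
`ℂⁿ ⊗ ℂⁿ` with `U_copy (e i ⊗ e₁) = e i ⊗ e i`.  Let `UpI = U_p ⊗ I`, `IUcopy = I ⊗ U_copy`
and `UpdI = U_p† ⊗ I` (the adjoint of a unitary being its inverse `Up.symm`), so that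
`Ũ_p = UpdI ∘ IUcopy ∘ UpI`.  Let `Π` be the orthogonal projection
of `A ⊗ ℂⁿ ⊗ ℂⁿ` onto `(ℂ·a₀) ⊗ (ℂ·e₁) ⊗ ℂⁿ`, the span of the orthonormal family
`(a₀ ⊗ e₁ ⊗ e_k)_k`.  Then `‖Π (Ũ_p (a₀ ⊗ e₁ ⊗ e₁))‖² = ∑ i, (p i)²`. -/
theorem stmt2 {n : ℕ} (hn : 1 ≤ n) {ι : Type*} [Fintype ι] [DecidableEq ι]
    (a₀ : EuclideanSpace ℂ ι) (ha₀ : ‖a₀‖ = 1)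
    (φ : Fin n → EuclideanSpace ℂ ι) (hφ : Orthonormal ℂ φ)
    (p : Fin n → ℝ) (hp0 : ∀ i, 0 ≤ p i) (hp1 : ∑ i, p i = 1)
    (e₁ : EuclideanSpace ℂ (Fin n)) (he₁ : e₁ = eb ⟨0, hn⟩)
    (Up : EuclideanSpace ℂ (ι × Fin n) ≃ₗᵢ[ℂ] EuclideanSpace ℂ (ι × Fin n))
    (hUp : Up (tp a₀ e₁) = ∑ i, (Real.sqrt (p i) : ℂ) • tp (φ i) (eb i))
    (Ucopy : EuclideanSpace ℂ (Fin n × Fin n) ≃ₗᵢ[ℂ] EuclideanSpace ℂ (Fin n × Fin n))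
    (hUcopy : ∀ i : Fin n, Ucopy (tp (eb i) e₁) = tp (eb i) (eb i))
    -- `UpI = U_p ⊗ I` on `A ⊗ ℂⁿ ⊗ ℂⁿ`:
    (UpI : EuclideanSpace ℂ ((ι × Fin n) × Fin n) ≃ₗᵢ[ℂ] EuclideanSpace ℂ ((ι × Fin n) × Fin n))
    (hUpI : ∀ (z : EuclideanSpace ℂ (ι × Fin n)) (c : EuclideanSpace ℂ (Fin n)),
      UpI (tp z c) = tp (Up z) c)
    -- `IUcopy = I ⊗ U_copy` on `A ⊗ ℂⁿ ⊗ ℂⁿ`: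
    (IUcopy : EuclideanSpace ℂ ((ι × Fin n) × Fin n) ≃ₗᵢ[ℂ] EuclideanSpace ℂ ((ι × Fin n) × Fin n))
    (hIUcopy : ∀ (a : EuclideanSpace ℂ ι) (z : EuclideanSpace ℂ (Fin n × Fin n)),
      IUcopy (tpL a z) = tpL a (Ucopy z))
    -- `UpdI = U_p† ⊗ I` on `A ⊗ ℂⁿ ⊗ ℂⁿ`:
    (UpdI : EuclideanSpace ℂ ((ι × Fin n) × Fin n) ≃ₗᵢ[ℂ] EuclideanSpace ℂ ((ι × Fin n) × Fin n))
    (hUpdI : ∀ (z : EuclideanSpace ℂ (ι × Fin n)) (c : EuclideanSpace ℂ (Fin n)),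
      UpdI (tp z c) = tp (Up.symm z) c) :
    -- `Π` is the orthogonal projection onto `(ℂ·a₀) ⊗ (ℂ·e₁) ⊗ ℂⁿ`, i.e. onto the span of
    -- the orthonormal family `(a₀ ⊗ e₁ ⊗ e_k)_{k ∈ [n]}`:
    ‖(Submodule.orthogonalProjectionOnto
        (Submodule.span ℂ (Set.range fun k : Fin n => tp (tp a₀ e₁) (eb k)))
        (UpdI (IUcopy (UpI (tp (tp a₀ e₁) e₁)))) :
      EuclideanSpace ℂ ((ι × Fin n) × Fin n))‖ ^ 2
      = ∑ i, (p i) ^ 2 :=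
  stmt2_general hn a₀ ha₀ φ hφ p hp0 e₁ he₁ Up hUp Ucopy hUcopy UpI hUpI IUcopy hIUcopy UpdI hUpdI
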